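/- arXiv:1911.08963 — 4 statements merged into one kernel-verified Lean document; each statement's English description precedes it below -/
import Mathlib

section
/- Let k, g be natural numbers with 2 ≤ g ≤ k. For a g-element subset S = {c_1 < c_2 < … < c_g} of {1,2,…,k}, let r(S) be the largest r ≥ 1 such that the top r elements c_{g−r+1}, …, c_g are consecutive integers. Then the sum, over all g-element subsets S of {1,…,k}, of min(r(S), g−1) equals C(k,g) + C(k−1,g−1) + C(k−2,g−2) + … + C(k−g+2, 2), i.e., Σ_{i=1}^{g−1} C(k−i+1, g−i+1). Consequently the total number of bit additions of the stack-based algorithm on an n-column matrix is [Σ_{i=1}^{g−1} C(k−i+1, g−i+1)]·n. -/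
open Finset

private lemma sup_mem_of_nonempty {S : Finset ℕ} (h : S.Nonempty) : S.sup id ∈ S := by
  obtain ⟨b, hb, he⟩ := Finset.exists_mem_eq_sup S h id
  simpa [he] using hb

private lemma sup_union_Ioc (T : Finset ℕ) (hT : T.Nonempty) (e : ℕ) :
    (T ∪ Ioc (T.sup id) (T.sup id + e)).sup id = T.sup id + e := by
  apply le_antisymm
  · apply Finset.sup_le
    intro x hx
    rcases Finset.mem_union.1 hx with h | h
    · exact le_trans (Finset.le_sup (f := id) h) (Nat.le_add_right _ _)
    · exact (Finset.mem_Ioc.1 h).2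
  · apply Finset.le_sup (f := id)
    rcases Nat.eq_zero_or_pos e with he | he
    · subst he; simp only [Nat.add_zero]; exact Finset.mem_union_left _ (sup_mem_of_nonempty hT)
    · exact Finset.mem_union_right _ (Finset.mem_Ioc.2 ⟨by omega, le_refl _⟩)

private lemma count_lemma (k g e : ℕ) (hgk : g ≤ k) (he : e + 2 ≤ g) :
    (((Icc 1 k).powersetCard g).filter
        (fun S => ∀ t ∈ range (e + 1), S.sup id - t ∈ S)).card
      = (k - e).choose (g - e) := by
  classical
  have hB : (k - e).choose (g - e) = ((Icc 1 (k - e)).powersetCard (g - e)).card := by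
    simp [Finset.card_powersetCard, Nat.card_Icc]
  rw [hB]
  apply Finset.card_nbij' (i := fun S => S.filter (fun x => x + e ≤ S.sup id))
    (j := fun T => T ∪ Ioc (T.sup id) (T.sup id + e))
  · -- hi
    intro S hS
    simp only [Finset.mem_coe, Finset.mem_filter, Finset.mem_powersetCard] at hS ⊢
    obtain ⟨⟨hsub, hcard⟩, hP⟩ := hS
    set m := S.sup id with hm
    have hne : S.Nonempty := Finset.card_pos.1 (by omega)
    have hmk : m ≤ k := (Finset.mem_Icc.1 (hsub (sup_mem_of_nonempty hne))).2
    have hmg : g ≤ m := by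
      have : S ⊆ Icc 1 m := fun x hx =>
        Finset.mem_Icc.2 ⟨(Finset.mem_Icc.1 (hsub hx)).1, Finset.le_sup (f := id) hx⟩
      have := Finset.card_le_card this
      rw [hcard, Nat.card_Icc] at this; omega
    have hdecomp : S.filter (fun x => ¬ x + e ≤ m) = Ioc (m - e) m := by
      ext x
      simp only [Finset.mem_filter, Finset.mem_Ioc, not_le]
      constructor
      · intro ⟨hx, hx2⟩
        have : x ≤ m := Finset.le_sup (f := id) hx
        omega
      · intro ⟨h1, h2⟩
        have hx : m - (m - x) ∈ S := hP (m - x) (Finset.mem_range.2 (by omega))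
        have : m - (m - x) = x := by omega
        rw [this] at hx
        exact ⟨hx, by omega⟩
    have hcardf : (S.filter (fun x => x + e ≤ m)).card = g - e := by
      have h1 := Finset.card_filter_add_card_filter_not
        (s := S) (p := fun x => x + e ≤ m)
      rw [hdecomp, Nat.card_Ioc, hcard] at h1
      omega
    refine ⟨fun x hx => ?_, hcardf⟩
    simp only [Finset.mem_filter] at hx
    obtain ⟨hx1, hx2⟩ := hx
    have := Finset.mem_Icc.1 (hsub hx1)
    exact Finset.mem_Icc.2 ⟨this.1, by omega⟩
  · -- hj
    intro T hT
    simp only [Finset.mem_coe, Finset.mem_powersetCard] at hT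
    obtain ⟨hsub, hcard⟩ := hT
    set M := T.sup id with hM
    have hne : T.Nonempty := Finset.card_pos.1 (by omega)
    have hMk : M ≤ k - e := (Finset.mem_Icc.1 (hsub (sup_mem_of_nonempty hne))).2
    have hM1 : 1 ≤ M := (Finset.mem_Icc.1 (hsub (sup_mem_of_nonempty hne))).1
    have hsup := sup_union_Ioc T hne e
    simp only [Finset.mem_coe, Finset.mem_filter, Finset.mem_powersetCard]
    refine ⟨⟨fun x hx => ?_, ?_⟩, fun t ht => ?_⟩
    · rcases Finset.mem_union.1 hx with h | h
      · have := Finset.mem_Icc.1 (hsub h); exact Finset.mem_Icc.2 ⟨this.1, by omega⟩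
      · have := Finset.mem_Ioc.1 h; exact Finset.mem_Icc.2 ⟨by omega, by omega⟩
    · rw [Finset.card_union_of_disjoint, hcard, Nat.card_Ioc]
      · omega
      · rw [Finset.disjoint_right]
        intro x hx hx2
        have h1 := (Finset.mem_Ioc.1 hx).1
        have h2 : x ≤ M := Finset.le_sup (f := id) hx2
        omega
    · rw [hsup]
      have ht' := Finset.mem_range.1 ht
      rcases Nat.eq_zero_or_pos (e - t) with h0 | h0
      · have : M + e - t = M := by omega
        rw [this]
        exact Finset.mem_union_left _ (sup_mem_of_nonempty hne)
      · exact Finset.mem_union_right _ (Finset.mem_Ioc.2 ⟨by omega, by omega⟩)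
  · -- left inverse
    intro S hS
    beta_reduce
    simp only [Finset.mem_coe, Finset.mem_filter, Finset.mem_powersetCard] at hS
    obtain ⟨⟨hsub, hcard⟩, hP⟩ := hS
    set m := S.sup id with hm
    have hne : S.Nonempty := Finset.card_pos.1 (by omega)
    have hmg : g ≤ m := by
      have : S ⊆ Icc 1 m := fun x hx =>
        Finset.mem_Icc.2 ⟨(Finset.mem_Icc.1 (hsub hx)).1, Finset.le_sup (f := id) hx⟩
      have := Finset.card_le_card this
      rw [hcard, Nat.card_Icc] at this; omega
    have hmem : m - e ∈ S.filter (fun x => x + e ≤ m) := by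
      refine Finset.mem_filter.2 ⟨hP e (Finset.mem_range.2 (by omega)), by omega⟩
    have hsupf : (S.filter (fun x => x + e ≤ m)).sup id = m - e := by
      apply le_antisymm
      · apply Finset.sup_le
        intro x hx
        have := (Finset.mem_filter.1 hx).2
        simp only [id]; omega
      · exact Finset.le_sup (f := id) hmem
    have hdecomp : S.filter (fun x => ¬ x + e ≤ m) = Ioc (m - e) m := by
      ext x
      simp only [Finset.mem_filter, Finset.mem_Ioc, not_le]
      constructor
      · intro ⟨hx, hx2⟩
        have : x ≤ m := Finset.le_sup (f := id) hx
        omega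
      · intro ⟨h1, h2⟩
        have hx : m - (m - x) ∈ S := hP (m - x) (Finset.mem_range.2 (by omega))
        have : m - (m - x) = x := by omega
        rw [this] at hx
        exact ⟨hx, by omega⟩
    simp only [hsupf]
    have : m - e + e = m := by omega
    rw [this, ← hdecomp]
    exact Finset.filter_union_filter_not_eq _ S
  · -- right inverse
    intro T hT
    beta_reduce
    simp only [Finset.mem_coe, Finset.mem_powersetCard] at hT
    obtain ⟨hsub, hcard⟩ := hT
    set M := T.sup id with hM
    have hne : T.Nonempty := Finset.card_pos.1 (by omega)
    have hsup := sup_union_Ioc T hne e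
    rw [hsup]
    ext x
    simp only [Finset.mem_filter, Finset.mem_union, Finset.mem_Ioc]
    constructor
    · rintro ⟨h | h, hle⟩
      · exact h
      · omega
    · intro hx
      exact ⟨Or.inl hx, by have : x ≤ M := Finset.le_sup (f := id) hx; omega⟩


/-- Cost of the stack-based algorithm: for each `g`-element subset `S` of
`{1,…,k}`, let `r(S)` be the largest `r` such that the top `r` elements of
`S` are consecutive integers (i.e. `max S - t ∈ S` for all `t < r`).  Then
the sum over all such `S` of `min (r S) (g-1)` equals
`Σ_{i=1}^{g-1} C(k-i+1, g-i+1)`, and hence the total number of bit additions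
on an `n`-column matrix is that sum times `n`. -/
theorem stack_based_algorithm_cost (k g n : ℕ) (hg : 2 ≤ g) (hgk : g ≤ k) :
    (∑ S ∈ (Finset.Icc 1 k).powersetCard g,
        min (Nat.findGreatest (fun r => ∀ t ∈ Finset.range r, S.sup id - t ∈ S) g)
          (g - 1))
      = ∑ i ∈ Finset.Icc 1 (g - 1), (k - i + 1).choose (g - i + 1) ∧
    (∑ S ∈ (Finset.Icc 1 k).powersetCard g,
        min (Nat.findGreatest (fun r => ∀ t ∈ Finset.range r, S.sup id - t ∈ S) g)
          (g - 1)) * n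
      = (∑ i ∈ Finset.Icc 1 (g - 1), (k - i + 1).choose (g - i + 1)) * n := by

  have main : (∑ S ∈ (Finset.Icc 1 k).powersetCard g,
        min (Nat.findGreatest (fun r => ∀ t ∈ Finset.range r, S.sup id - t ∈ S) g)
          (g - 1))
      = ∑ i ∈ Finset.Icc 1 (g - 1), (k - i + 1).choose (g - i + 1) := by
    have step1 : ∀ S ∈ (Finset.Icc 1 k).powersetCard g,
        min (Nat.findGreatest (fun r => ∀ t ∈ Finset.range r, S.sup id - t ∈ S) g) (g - 1)
        = ∑ j ∈ Finset.Icc 1 (g - 1),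
            (if (∀ t ∈ Finset.range j, S.sup id - t ∈ S) then 1 else 0) := by
      intro S _
      set P := fun r => ∀ t ∈ Finset.range r, S.sup id - t ∈ S with hPdef
      set F := Nat.findGreatest P g with hF
      have hFg : F ≤ g := Nat.findGreatest_le g
      have hanti : ∀ j j' : ℕ, j' ≤ j → P j → P j' := by
        intro j j' hle h t ht
        exact h t (Finset.mem_range.2 (lt_of_lt_of_le (Finset.mem_range.1 ht) hle))
      have hP0 : P 0 := by intro t ht; simp at ht
      have hPF : P F := Nat.findGreatest_spec (Nat.zero_le g) hP0
      have hiff : ∀ j ∈ Finset.Icc 1 (g - 1), (P j ↔ j ≤ F) := by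
        intro j hj
        rw [Finset.mem_Icc] at hj
        exact ⟨fun h => Nat.le_findGreatest (by omega) h, fun h => hanti F j h hPF⟩
      have hsum : ∑ j ∈ Finset.Icc 1 (g - 1), (if P j then 1 else 0)
          = ((Finset.Icc 1 (g - 1)).filter P).card := (Finset.card_filter P _).symm
      rw [hsum, Finset.filter_congr hiff]
      have : (Finset.Icc 1 (g - 1)).filter (fun j => j ≤ F) = Finset.Icc 1 (min F (g - 1)) := by
        ext x
        simp only [Finset.mem_filter, Finset.mem_Icc]
        omega
      rw [this, Nat.card_Icc]
      omega
    rw [Finset.sum_congr rfl step1, Finset.sum_comm]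
    apply Finset.sum_congr rfl
    intro j hj
    rw [Finset.mem_Icc] at hj
    obtain ⟨e, rfl⟩ : ∃ e, j = e + 1 := ⟨j - 1, by omega⟩
    have hsum : ∑ S ∈ (Finset.Icc 1 k).powersetCard g,
          (if (∀ t ∈ Finset.range (e + 1), S.sup id - t ∈ S) then 1 else 0)
        = (((Finset.Icc 1 k).powersetCard g).filter
            (fun S => ∀ t ∈ Finset.range (e + 1), S.sup id - t ∈ S)).card :=
      (Finset.card_filter _ _).symm
    rw [hsum, count_lemma k g e hgk (by omega)]
    congr 1 <;> omega
  exact ⟨main, by rw [main]⟩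
end

section
/- Let s, g, k be natural numbers with s ≥ 1, s < g ≤ k, and set f = ⌊(g−1)/s⌋ (so f ≥ 1). Then Σ_{j=f·s}^{k−(g−f·s)} (C(k−j, g−s·f) + f − 1)·C(j−1, f·s−1) = C(k, g) + (f−1)·C(k−g+f·s, f·s). Consequently, the total number of bit additions of the algorithm with saved additions on an n-column matrix — namely f−1 row additions for each extendable (f·s)-element prefix plus one row addition for each g-element combination, each row addition costing n bit additions — equals [Σ_{j=f·s}^{k−(g−f·s)} (C(k−j, g−s·f)+f−1)·C(j−1, f·s−1)]·n. -/
/-!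
Writing `m = f·s` and `r = g - m`, the weight `C(k-j, r) + (f-1)` splits the sum in two.
The first part counts the `g`-subsets of `{1, …, k}` according to their `m`-th smallest
element `j` (upper Chu–Vandermonde, read off from `(1-X)^{-m} (1-X)^{-(r+1)} = (1-X)^{-(g+1)}`),
the second counts the `m`-subsets of `{1, …, k-r}` according to their largest element
(hockey stick).
-/

open Finset PowerSeries

theorem Nat.sum_antidiagonal_add_choose_mul_add_choose (a b n : ℕ) :
    ∑ ij ∈ antidiagonal n, (a + ij.1).choose a * (b + ij.2).choose b
      = (a + b + 1 + n).choose (a + b + 1) := by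
  have h := congrArg (fun p : ℤ⟦X⟧ ↦ coeff n p)
    (congrArg Units.val (invOneSubPow_add ℤ (a + 1) (b + 1)))
  simp only [Units.val_mul, show a + 1 + (b + 1) = a + b + 1 + 1 by ring,
    invOneSubPow_val_succ_eq_mk_add_choose, coeff_mul, coeff_mk] at h
  exact_mod_cast h.symm

theorem sum_Icc_choose_sub_mul_choose_pred (k m r : ℕ) (hm : 1 ≤ m) :
    ∑ j ∈ Icc m (k - r), (k - j).choose r * (j - 1).choose (m - 1) = k.choose (m + r) := by
  rcases lt_or_ge k (m + r) with hk | hk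
  · rw [Icc_eq_empty (by omega), sum_empty, Nat.choose_eq_zero_of_lt hk]
  obtain ⟨N, rfl⟩ : ∃ N, k = m + r + N := ⟨k - (m + r), by omega⟩
  calc ∑ j ∈ Icc m (m + r + N - r), (m + r + N - j).choose r * (j - 1).choose (m - 1)
      = ∑ i ∈ range (N + 1), (m - 1 + i).choose (m - 1) * (r + (N - i)).choose r := by
        rw [← Ico_add_one_right_eq_Icc, sum_Ico_eq_sum_range,
          show m + r + N - r + 1 - m = N + 1 by omega]
        refine sum_congr rfl fun i hi ↦ ?_
        rw [mem_range] at hi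
        rw [mul_comm, show m + r + N - (m + i) = r + (N - i) by omega,
          show m + i - 1 = m - 1 + i by omega]
    _ = (m + r + N).choose (m + r) := by
        have h := Nat.sum_antidiagonal_add_choose_mul_add_choose (m - 1) r N
        rw [Nat.sum_antidiagonal_eq_sum_range_succ_mk] at h
        rw [h]
        congr 1 <;> omega

theorem sum_Icc_choose_pred (k m : ℕ) (hm : 1 ≤ m) :
    ∑ j ∈ Icc m k, (j - 1).choose (m - 1) = k.choose m := by
  simpa using sum_Icc_choose_sub_mul_choose_pred k m 0 hm

theorem sum_Icc_choose_sub_add_mul_choose_pred (k m r c : ℕ) (hm : 1 ≤ m) :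
    ∑ j ∈ Icc m (k - r), ((k - j).choose r + c) * (j - 1).choose (m - 1)
      = k.choose (m + r) + c * (k - r).choose m := by
  simp only [add_mul, sum_add_distrib, ← mul_sum,
    sum_Icc_choose_sub_mul_choose_pred k m r hm, sum_Icc_choose_pred (k - r) m hm]

/-- Cost identity for the algorithm with saved additions: with
`f = ⌊(g-1)/s⌋`,
`Σ_{j=f·s}^{k-(g-f·s)} (C(k-j, g-s·f) + f - 1) · C(j-1, f·s-1)
  = C(k,g) + (f-1)·C(k-g+f·s, f·s)`,
and consequently the total number of bit additions on an `n`-column matrix,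
namely `f-1` row additions per extendable `(f·s)`-element prefix plus one row
addition per `g`-element combination (each row addition costing `n` bit
additions), equals the sum times `n`. -/
theorem saved_additions_algorithm_cost (s g k n : ℕ) (hs : 1 ≤ s)
    (hsg : s < g) (hgk : g ≤ k) :
    (∑ j ∈ Finset.Icc ((g - 1) / s * s) (k - (g - (g - 1) / s * s)),
        ((k - j).choose (g - s * ((g - 1) / s)) + (g - 1) / s - 1) *
          (j - 1).choose ((g - 1) / s * s - 1))
      = k.choose g +
          ((g - 1) / s - 1) * (k - g + (g - 1) / s * s).choose ((g - 1) / s * s) ∧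
    ((g - 1) / s - 1) * (k - g + (g - 1) / s * s).choose ((g - 1) / s * s) * n
        + k.choose g * n
      = (∑ j ∈ Finset.Icc ((g - 1) / s * s) (k - (g - (g - 1) / s * s)),
          ((k - j).choose (g - s * ((g - 1) / s)) + (g - 1) / s - 1) *
            (j - 1).choose ((g - 1) / s * s - 1)) * n := by
  set f := (g - 1) / s
  have hf : 1 ≤ f := (Nat.one_le_div_iff hs).mpr (by omega)
  have hm : 1 ≤ f * s := Nat.one_le_iff_ne_zero.mpr (Nat.mul_ne_zero (by omega) (by omega))
  have hmg : f * s < g := by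
    have : f * s ≤ g - 1 := Nat.div_mul_le_self (g - 1) s
    omega
  have hsum : ∑ j ∈ Icc (f * s) (k - (g - f * s)),
        ((k - j).choose (g - s * f) + f - 1) * (j - 1).choose (f * s - 1)
      = k.choose g + (f - 1) * (k - g + f * s).choose (f * s) := by
    simp only [mul_comm s f, Nat.add_sub_assoc hf,
      sum_Icc_choose_sub_add_mul_choose_pred k (f * s) (g - f * s) (f - 1) hm]
    rw [Nat.add_sub_cancel' hmg.le, show k - (g - f * s) = k - g + f * s by omega]
  refine ⟨hsum, ?_⟩
  rw [hsum]
  ring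
end

section
/- Let k, g be natural numbers with 2 ≤ g ≤ k. Then C(k,g) + (g−2)·C(k−1, g−1) ≤ C(k,g)·(g−1); that is, the number of row additions performed by the optimized algorithm, Σ_{j=g−1}^{k−1} C(j−1, g−2)·(g−2+k−j), is at most the number C(k,g)·(g−1) performed by the basic algorithm. -/
/-!
Extending the sum to all `j < k` (the extra terms vanish) and shifting the index, the optimized
count becomes `(g - 2) · Σ_{i<k-1} C(i, g-2) + Σ_{i<k-1} C(i, g-2)·(k-1-i)`. The first sum is the
hockey-stick identity `C(k-1, g-1)`, the second is the hockey stick applied twice, `C(k, g)`.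
The bound then reduces to `C(k-1, g-1) ≤ C(k, g)`, read off Pascal's rule.
-/

open Finset

namespace Nat

theorem sum_range_choose_eq_choose_succ (n m : ℕ) :
    ∑ i ∈ range n, i.choose m = n.choose (m + 1) := by
  induction n with
  | zero => simp
  | succ n ih => rw [sum_range_succ, ih, choose_succ_succ', add_comm]

theorem sum_range_choose_mul_sub (n m : ℕ) :
    ∑ i ∈ range n, i.choose m * (n - i) = (n + 1).choose (m + 2) := by
  induction n with
  | zero => simp [choose_eq_zero_of_lt]
  | succ n ih =>
    have hsplit : ∑ i ∈ range (n + 1), i.choose m * (n + 1 - i)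
        = ∑ i ∈ range (n + 1), i.choose m * (n - i) + ∑ i ∈ range (n + 1), i.choose m := by
      rw [← sum_add_distrib]
      refine sum_congr rfl fun i hi => ?_
      rw [show n + 1 - i = n - i + 1 by have := mem_range.mp hi; omega, mul_add_one]
    rw [hsplit, sum_range_succ, ih, sum_range_choose_eq_choose_succ, Nat.sub_self, mul_zero,
      add_zero, choose_succ_succ' (n + 1) (m + 1), add_comm]

theorem choose_le_choose_succ_succ (n r : ℕ) : n.choose r ≤ (n + 1).choose (r + 1) :=
  choose_succ_succ' n r ▸ Nat.le_add_right _ _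

end Nat

open Nat

theorem sum_optimized_row_additions_eq (k g : ℕ) (hg : 2 ≤ g) :
    ∑ j ∈ Icc (g - 1) (k - 1), (j - 1).choose (g - 2) * (g - 2 + (k - j))
      = k.choose g + (g - 2) * (k - 1).choose (g - 1) := by
  obtain ⟨m, rfl⟩ : ∃ m, g = m + 2 := ⟨g - 2, by omega⟩
  rcases k with _ | n
  · simp
  simp only [add_tsub_cancel_right, show m + 2 - 1 = m + 1 by omega]
  calc ∑ j ∈ Icc (m + 1) n, (j - 1).choose m * (m + (n + 1 - j))
      = ∑ j ∈ Ico 1 (n + 1), (j - 1).choose m * (m + (n + 1 - j)) := by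
        refine sum_subset (fun j hj => ?_) fun j hj hj' => ?_
        · simp only [mem_Icc, mem_Ico] at hj ⊢; omega
        · simp only [mem_Icc, mem_Ico, not_and_or] at hj hj'
          rw [choose_eq_zero_of_lt (by omega), zero_mul]
    _ = ∑ i ∈ range n, (m * i.choose m + i.choose m * (n - i)) := by
        rw [sum_Ico_eq_sum_range, Nat.add_sub_cancel]
        refine sum_congr rfl fun i _ => ?_
        rw [show 1 + i - 1 = i by omega, show n + 1 - (1 + i) = n - i by omega]
        ring
    _ = (n + 1).choose (m + 2) + m * n.choose (m + 1) := by
        rw [sum_add_distrib, ← mul_sum, sum_range_choose_eq_choose_succ,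
          sum_range_choose_mul_sub, add_comm]

theorem choose_add_mul_choose_pred_le (k g : ℕ) (hg : 2 ≤ g) :
    k.choose g + (g - 2) * (k - 1).choose (g - 1) ≤ k.choose g * (g - 1) := by
  obtain ⟨m, rfl⟩ : ∃ m, g = m + 2 := ⟨g - 2, by omega⟩
  have hpred : (k - 1).choose (m + 1) ≤ k.choose (m + 2) := by
    rcases k with _ | n
    · simp
    · exact choose_le_choose_succ_succ n (m + 1)
  calc k.choose (m + 2) + (m + 2 - 2) * (k - 1).choose (m + 2 - 1)
      ≤ k.choose (m + 2) + m * k.choose (m + 2) := by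
        rw [Nat.add_sub_cancel, show m + 2 - 1 = m + 1 by omega]; gcongr
    _ = k.choose (m + 2) * (m + 2 - 1) := by
        rw [show m + 2 - 1 = m + 1 by omega]; ring

theorem optimized_le_basic_general (k g : ℕ) (hg : 2 ≤ g) :
    k.choose g + (g - 2) * (k - 1).choose (g - 1) ≤ k.choose g * (g - 1) ∧
    (∑ j ∈ Finset.Icc (g - 1) (k - 1),
        (j - 1).choose (g - 2) * (g - 2 + (k - j)))
      ≤ k.choose g * (g - 1) := by
  have hbound := choose_add_mul_choose_pred_le k g hg
  exact ⟨hbound, sum_optimized_row_additions_eq k g hg ▸ hbound⟩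

/-- The optimized algorithm performs no more row additions than the basic
algorithm: `C(k,g) + (g-2)·C(k-1,g-1) ≤ C(k,g)·(g-1)`, that is,
`Σ_{j=g-1}^{k-1} C(j-1, g-2)·(g-2+k-j) ≤ C(k,g)·(g-1)`. -/
theorem optimized_le_basic (k g : ℕ) (hg : 2 ≤ g) (hgk : g ≤ k) :
    k.choose g + (g - 2) * (k - 1).choose (g - 1) ≤ k.choose g * (g - 1) ∧
    (∑ j ∈ Finset.Icc (g - 1) (k - 1),
        (j - 1).choose (g - 2) * (g - 2 + (k - j)))
      ≤ k.choose g * (g - 1) :=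
  optimized_le_basic_general k g hg
end

section
/- Let k, g be natural numbers with 2 ≤ g ≤ k. Then Σ_{i=1}^{g−1} C(k−i+1, g−i+1) ≤ C(k,g) + (g−2)·C(k−1, g−1); that is, the number of row additions performed by the stack-based algorithm, C(k,g)+C(k−1,g−1)+…+C(k−g+2,2), is at most the number performed by the optimized algorithm. -/
/-!
The optimized count is exactly `C(k,g) + (g-2)·C(k-1,g-1)`: write `g = a + 2`, `j = a + 1 + t`, and
split the weight `a + (k - g + 1 - t)`; the constant part is a hockey-stick sum and the linear
part its iterate `∑_{i<n} C(i+a,a)·(n-i) = C(n+a+1,a+2)`. In the stack sum the term `i = 1` is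
`C(k,g)`, and each of the other `g - 2` terms is `C(n + (k-g), n)` with `n ≤ g - 1`, hence at most
`C(k-1,g-1)` because `C(n+m,n)` increases with `n`.
-/

open Finset

namespace Nat

theorem add_choose_le_add_choose {n n' : ℕ} (m : ℕ) (h : n ≤ n') :
    (n + m).choose n ≤ (n' + m).choose n' := by
  rw [choose_symm_add, choose_symm_add (a := n')]
  exact choose_le_choose m (by omega)

theorem sum_range_add_choose_mul_sub (n k : ℕ) :
    ∑ i ∈ range n, (i + k).choose k * (n - i) = (n + k + 1).choose (k + 2) := by
  induction n with
  | zero => simp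
  | succ n ih =>
    have split : ∀ i ∈ range (n + 1),
        (i + k).choose k * (n + 1 - i) = (i + k).choose k * (n - i) + (i + k).choose k := by
      intro i hi
      rw [mem_range] at hi
      rw [show n + 1 - i = n - i + 1 by omega, Nat.mul_succ]
    rw [sum_congr rfl split, sum_add_distrib, sum_range_succ, Nat.sub_self, Nat.mul_zero,
      Nat.add_zero, ih, sum_range_add_choose, show n + 1 + k + 1 = (n + k + 1) + 1 by ring,
      choose_succ_succ' (n + k + 1) (k + 1)]
    ring

end Nat

theorem sum_stack_le (k g : ℕ) (hg : 2 ≤ g) (hgk : g ≤ k) :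
    ∑ i ∈ Icc 1 (g - 1), (k - i + 1).choose (g - i + 1)
      ≤ k.choose g + (g - 2) * (k - 1).choose (g - 1) := by
  have later_le : ∀ i ∈ Ioc 1 (g - 1), (k - i + 1).choose (g - i + 1) ≤ (k - 1).choose (g - 1) := by
    intro i hi
    rw [mem_Ioc] at hi
    have := Nat.add_choose_le_add_choose (k - g) (show g - i + 1 ≤ g - 1 by omega)
    rwa [show g - i + 1 + (k - g) = k - i + 1 by omega, show g - 1 + (k - g) = k - 1 by omega]
      at this
  calc ∑ i ∈ Icc 1 (g - 1), (k - i + 1).choose (g - i + 1)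
      = ∑ i ∈ Ioc 1 (g - 1), (k - i + 1).choose (g - i + 1) + k.choose g := by
        rw [← sum_Ioc_add_eq_sum_Icc (by omega), Nat.sub_add_cancel (by omega),
          Nat.sub_add_cancel (by omega)]
    _ ≤ #(Ioc 1 (g - 1)) • (k - 1).choose (g - 1) + k.choose g := by
        gcongr; exact sum_le_card_nsmul _ _ _ later_le
    _ = k.choose g + (g - 2) * (k - 1).choose (g - 1) := by
        rw [Nat.card_Ioc, smul_eq_mul, show g - 1 - 1 = g - 2 by omega, add_comm]

theorem sum_optimized_eq (k g : ℕ) (hg : 2 ≤ g) (hgk : g ≤ k) :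
    ∑ j ∈ Icc (g - 1) (k - 1), (j - 1).choose (g - 2) * (g - 2 + (k - j))
      = k.choose g + (g - 2) * (k - 1).choose (g - 1) := by
  obtain ⟨a, rfl⟩ : ∃ a, g = a + 2 := ⟨g - 2, by omega⟩
  obtain ⟨m, rfl⟩ : ∃ m, k = m + a + 2 := ⟨k - (a + 2), by omega⟩
  have reindex : ∀ t ∈ range (m + 1),
      (a + 1 + t - 1).choose a * (a + (m + a + 2 - (a + 1 + t)))
        = a * (t + a).choose a + (t + a).choose a * (m + 1 - t) := by
    intro t ht
    rw [mem_range] at ht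
    rw [show a + 1 + t - 1 = t + a by omega, show m + a + 2 - (a + 1 + t) = m + 1 - t by omega]
    ring
  rw [Nat.add_sub_cancel, show a + 2 - 1 = a + 1 by omega, show m + a + 2 - 1 = m + a + 1 by omega,
    ← Ico_add_one_right_eq_Icc, sum_Ico_eq_sum_range, show m + a + 1 + 1 - (a + 1) = m + 1 by omega,
    sum_congr rfl reindex, sum_add_distrib, ← mul_sum, Nat.sum_range_add_choose,
    Nat.sum_range_add_choose_mul_sub, show m + 1 + a + 1 = m + a + 2 by omega, add_comm]

/-- The stack-based algorithm performs no more row additions than the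
optimized algorithm:
`Σ_{i=1}^{g-1} C(k-i+1, g-i+1) ≤ C(k,g) + (g-2)·C(k-1, g-1)`, the right-hand
side being `Σ_{j=g-1}^{k-1} C(j-1, g-2)·(g-2+k-j)`. -/
theorem stack_le_optimized (k g : ℕ) (hg : 2 ≤ g) (hgk : g ≤ k) :
    (∑ i ∈ Finset.Icc 1 (g - 1), (k - i + 1).choose (g - i + 1))
      ≤ k.choose g + (g - 2) * (k - 1).choose (g - 1) ∧
    (∑ i ∈ Finset.Icc 1 (g - 1), (k - i + 1).choose (g - i + 1))
      ≤ ∑ j ∈ Finset.Icc (g - 1) (k - 1),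
          (j - 1).choose (g - 2) * (g - 2 + (k - j)) := by
  rw [sum_optimized_eq k g hg hgk]
  exact ⟨sum_stack_le k g hg hgk, sum_stack_le k g hg hgk⟩
end
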